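/- Let u = a^{r_0} b^{s_0} γ ∈ L_∞ where γ is empty or begins with #, and suppose one of the following holds: r_0 = 0, or s_0 ≠ 0, or the x_1-exponents r_1 or s_1 are nonzero. Then the L_∞ representative of ū x_0^{-1} is v = a^{r_0} b^{s_0+1} γ. -/

import Mathlib

/-- The relators of Thompson's group `F` in its standard infinite presentation:
`x_j x_i = x_i x_{j+1}` whenever `i < j`. -/
def thompsonRels : Set (FreeGroup ℕ) :=
  {r | ∃ i j : ℕ, i < j ∧
    r = FreeGroup.of j * FreeGroup.of i * (FreeGroup.of (j + 1))⁻¹ * (FreeGroup.of i)⁻¹}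

/-- Thompson's group `F`, presented by `⟨x_0, x_1, … | x_j x_i = x_i x_{j+1} (i < j)⟩`. -/
abbrev ThompsonF : Type := PresentedGroup thompsonRels

/-- The generator `x_n` of Thompson's group `F`. -/
def x (n : ℕ) : ThompsonF := PresentedGroup.of n

/-- The three-letter symbol alphabet `{a, b, #}` (with `h` denoting `#`). -/
inductive A : Type
  | a | b | h
deriving DecidableEq

instance : Fintype A :=
  Fintype.ofList [A.a, A.b, A.h] (by intro t; cases t <;> simp)

/-- The block `a^r b^s`. -/
def block (r s : ℕ) : List A := List.replicate r A.a ++ List.replicate s A.b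

/-- The string `a^{r 0} b^{s 0} # a^{r 1} b^{s 1} # ⋯ # a^{r M} b^{s M}`. -/
def lword (M : ℕ) (r s : ℕ → ℕ) : List A :=
  List.intercalate [A.h] ((List.range (M + 1)).map fun i => block (r i) (s i))

/-- The exponent conditions: exactly one of `r M, s M` is nonzero, and
`r i * s i > 0` implies `r (i+1) + s (i+1) > 0` for `i < M`. -/
def goodParams (M : ℕ) (r s : ℕ → ℕ) : Prop :=
  ((r M ≠ 0 ∧ s M = 0) ∨ (r M = 0 ∧ s M ≠ 0)) ∧
    ∀ i < M, 0 < r i * s i → 0 < r (i + 1) + s (i + 1)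

/-- The normal form language `L_∞` over `{a, b, #}`: all strings
`a^{r_0} b^{s_0} # ⋯ # a^{r_M} b^{s_M}` satisfying the exponent conditions,
together with the empty string. -/
def Linf : Language A :=
  {w | w = [] ∨ ∃ M r s, goodParams M r s ∧ w = lword M r s}

/-- The group element `x_0^{r_0} ⋯ x_M^{r_M} x_M^{-s_M} ⋯ x_0^{-s_0}` of Thompson's
group `F` encoded by the string `a^{r_0} b^{s_0} # ⋯ # a^{r_M} b^{s_M}`. -/
def gword (M : ℕ) (r s : ℕ → ℕ) : ThompsonF :=
  (((List.range (M + 1)).map fun i => x i ^ r i).prod) *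
    (((List.range (M + 1)).reverse.map fun i => (x i)⁻¹ ^ s i).prod)

/-- The element of Thompson's group `F` represented by a string in `L_∞`:
splitting on `#`, the `i`-th block `a^{r_i} b^{s_i}` contributes `x_i^{r_i}` to the
positive part and `x_i^{-s_i}` to the (reversed) negative part. -/
def evalL (w : List A) : ThompsonF :=
  let bs := (w.splitOn A.h).zipIdx.map Prod.swap
  ((bs.map fun p => x p.1 ^ (p.2.count A.a)).prod) *
    ((bs.reverse.map fun p => (x p.1)⁻¹ ^ (p.2.count A.b)).prod)

/-!
Appending a `b` to the first `#`-block only raises `s₀`, and the `b`s of that block produce the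
rightmost factor `x₀^{-s₀}` of the normal form, so the represented element gets multiplied on the
right by `x₀⁻¹`. The new word is again in `L_∞` because the only exponent condition that can
break is the one at the first block (`r₀ s₀ > 0 → r₁ + s₁ > 0`, or, for a single block, that
exactly one of `r₀, s₀` is nonzero), and the hypotheses rule out exactly those failures.
-/

namespace List

variable {α : Type*} [BEq α] [LawfulBEq α]

theorem splitOn_append_of_not_mem {a : α} {xs : List α} (h : a ∉ xs) (ys : List α) :
    (xs ++ ys).splitOn a = (ys.splitOn a).modifyHead (xs ++ ·) := by
  induction xs with
  | nil => exact (congrFun modifyHead_id _).symm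
  | cons x xs ih =>
    rw [mem_cons, not_or] at h
    rw [cons_append, splitOn_cons_eq_if_modifyHead, if_neg (by simpa using Ne.symm h.1),
      ih h.2, modifyHead_modifyHead]
    rfl

end List

lemma h_not_mem_block (r s : ℕ) : A.h ∉ block r s := by
  simp [block, List.mem_replicate]

@[simp]
lemma length_block (r s : ℕ) : (block r s).length = r + s := by
  simp [block]

@[simp]
lemma count_a_block (r s : ℕ) : (block r s).count A.a = r := by
  simp [block, List.count_replicate]

@[simp]
lemma count_b_block (r s : ℕ) : (block r s).count A.b = s := by
  simp [block, List.count_replicate]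

lemma block_inj {r s r' s' : ℕ} : block r s = block r' s' ↔ r = r' ∧ s = s' :=
  ⟨fun h => ⟨by simpa using congrArg (List.count A.a) h, by simpa using congrArg (List.count A.b) h⟩,
    by rintro ⟨rfl, rfl⟩; rfl⟩

lemma splitOn_block_append {γ : List A} (hγ : γ = [] ∨ ∃ γ', γ = A.h :: γ') (r s : ℕ) :
    (block r s ++ γ).splitOn A.h = block r s :: (γ.splitOn A.h).tail := by
  rcases hγ with rfl | ⟨γ', rfl⟩
  · simpa using List.splitOn_eq_singleton (h_not_mem_block r s)
  · simp [List.splitOn_append_cons_self_of_not_mem (h_not_mem_block r s),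
      List.splitOn_cons_eq_if_modifyHead]

lemma splitOn_lword (M : ℕ) (r s : ℕ → ℕ) :
    (lword M r s).splitOn A.h = (List.range (M + 1)).map fun i => block (r i) (s i) :=
  List.splitOn_intercalate _ (by simp [h_not_mem_block]) (by simp)

lemma getD_one_splitOn_lword (M : ℕ) (r s : ℕ → ℕ) :
    ((lword M r s).splitOn A.h).getD 1 [] = if M = 0 then [] else block (r 1) (s 1) := by
  cases M <;> simp [splitOn_lword, List.range_succ_eq_map]

lemma lword_update_zero (M : ℕ) (r s : ℕ → ℕ) (n : ℕ) :
    lword M r (Function.update s 0 n) = block (r 0) n ++ (lword M r s).drop (r 0 + s 0) := by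
  cases M with
  | zero => simp [lword]
  | succ N =>
    have hne : ∀ f : ℕ → List A, (List.range (N + 1)).map f ≠ [] := by simp
    rw [lword, lword, List.range_succ_eq_map, List.map_cons, List.map_cons, List.map_map,
      List.map_map, List.intercalate_cons_of_ne_nil (hne _),
      List.intercalate_cons_of_ne_nil (hne _)]
    simp [Function.comp_def]

lemma evalL_of_splitOn_eq_cons {w c : List A} {rest : List (List A)}
    (hw : w.splitOn A.h = c :: rest) :
    evalL w = x 0 ^ c.count A.a *
        (((rest.zipIdx 1).map Prod.swap).map fun p => x p.1 ^ p.2.count A.a).prod *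
      ((((rest.zipIdx 1).map Prod.swap).reverse.map fun p => (x p.1)⁻¹ ^ p.2.count A.b).prod *
        (x 0)⁻¹ ^ c.count A.b) := by
  simp [evalL, hw, List.zipIdx_cons]

lemma evalL_append_b_cons {xs : List A} (hxs : A.h ∉ xs) (ys : List A) :
    evalL (xs ++ A.b :: ys) = evalL (xs ++ ys) * (x 0)⁻¹ := by
  obtain ⟨c, rest, hys⟩ := List.exists_cons_of_ne_nil (List.splitOn_ne_nil A.h ys)
  have hb : (xs ++ A.b :: ys).splitOn A.h = (xs ++ A.b :: c) :: rest := by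
    simp [List.splitOn_append_of_not_mem hxs, List.splitOn_cons_eq_if_modifyHead, hys]
  have h0 : (xs ++ ys).splitOn A.h = (xs ++ c) :: rest := by
    simp [List.splitOn_append_of_not_mem hxs, hys]
  rw [evalL_of_splitOn_eq_cons hb, evalL_of_splitOn_eq_cons h0]
  simp [mul_assoc, ← add_assoc, pow_succ]

lemma goodParams_update_zero {M : ℕ} {r s : ℕ → ℕ} (hg : goodParams M r s)
    (h : r 0 = 0 ∨ s 0 ≠ 0 ∨ (M ≠ 0 ∧ 0 < r 1 + s 1)) :
    goodParams M r (Function.update s 0 (s 0 + 1)) := by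
  obtain ⟨hlast, hstep⟩ := hg
  refine ⟨?_, fun i hi hpos => ?_⟩
  · rcases eq_or_ne M 0 with rfl | hM
    · have hr : r 0 = 0 := by omega
      simp [hr]
    · simpa [Function.update_apply, hM] using hlast
  · simp only [Function.update_apply, Nat.succ_ne_zero, if_false] at hpos ⊢
    rcases eq_or_ne i 0 with rfl | hi0
    · have hr : 0 < r 0 := Nat.pos_of_mul_pos_right hpos
      rcases h with h | h | h
      · omega
      · exact hstep 0 hi (Nat.mul_pos hr (Nat.pos_of_ne_zero h))
      · exact h.2
    · simpa [hi0] using hstep i hi (by simpa [hi0] using hpos)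

lemma block_append_mem_Linf {r₀ s₀ : ℕ} {γ : List A} (hγ : γ = [] ∨ ∃ γ', γ = A.h :: γ')
    (hu : block r₀ s₀ ++ γ ∈ Linf)
    (hcond : r₀ = 0 ∨ s₀ ≠ 0 ∨
      (((block r₀ s₀ ++ γ).splitOn A.h).getD 1 []).count A.a ≠ 0 ∨
      (((block r₀ s₀ ++ γ).splitOn A.h).getD 1 []).count A.b ≠ 0) :
    block r₀ (s₀ + 1) ++ γ ∈ Linf := by
  rcases hu with hnil | ⟨M, r, s, hg, hw⟩
  · obtain ⟨rfl, rfl, rfl⟩ : r₀ = 0 ∧ s₀ = 0 ∧ γ = [] := by simpa [block] using hnil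
    exact Or.inr ⟨0, fun _ => 0, fun _ => 1, by simp [goodParams], rfl⟩
  have hfirst := splitOn_block_append hγ r₀ s₀
  rw [hw, splitOn_lword, List.range_succ_eq_map, List.map_cons] at hfirst
  obtain ⟨rfl, rfl⟩ := block_inj.1 (List.cons.inj hfirst).1
  rw [hw, getD_one_splitOn_lword] at hcond
  have hcond' : r 0 = 0 ∨ s 0 ≠ 0 ∨ (M ≠ 0 ∧ 0 < r 1 + s 1) := by
    split_ifs at hcond with hM <;> simp at hcond <;> omega
  refine Or.inr ⟨M, r, Function.update s 0 (s 0 + 1), goodParams_update_zero hg hcond', ?_⟩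
  rw [lword_update_zero, ← hw, List.drop_left' (length_block _ _)]

/-- Let `u = a^{r₀} b^{s₀} γ ∈ L_∞` with `γ` empty or beginning with `#`, and
suppose `r₀ = 0`, or `s₀ ≠ 0`, or the `x_1`-exponents `r₁` or `s₁` (the `a`- and
`b`-counts of the second `#`-block of `u`) are nonzero.  Then the `L_∞`
representative of `ū x_0⁻¹` is `v = a^{r₀} b^{s₀+1} γ`. -/
theorem Linf_mult_x0_inv_easy_case (r₀ s₀ : ℕ) (γ : List A)
    (hγ : γ = [] ∨ ∃ γ', γ = A.h :: γ')
    (hu : List.replicate r₀ A.a ++ List.replicate s₀ A.b ++ γ ∈ Linf)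
    (hcond : r₀ = 0 ∨ s₀ ≠ 0 ∨
      (((List.replicate r₀ A.a ++ List.replicate s₀ A.b ++ γ).splitOn A.h).getD 1 []).count A.a ≠ 0 ∨
      (((List.replicate r₀ A.a ++ List.replicate s₀ A.b ++ γ).splitOn A.h).getD 1 []).count A.b ≠ 0) :
    List.replicate r₀ A.a ++ List.replicate (s₀ + 1) A.b ++ γ ∈ Linf ∧
      evalL (List.replicate r₀ A.a ++ List.replicate (s₀ + 1) A.b ++ γ) =
        evalL (List.replicate r₀ A.a ++ List.replicate s₀ A.b ++ γ) * (x 0)⁻¹ := by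
  refine ⟨block_append_mem_Linf hγ hu hcond, ?_⟩
  simpa [block, List.replicate_succ'] using evalL_append_b_cons (h_not_mem_block r₀ s₀) γ
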